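/- arXiv:2406.01282 — 3 statements merged into one kernel-verified Lean document; each statement's English description precedes it below -/
import Mathlib

section
/- (Proposition 1, geodesic-membership part.) Let κ < 0, let x and y be points of the Poincaré ball of curvature κ with y ≠ x, and let 0 < δ < τ. Define z = exp^κ_x((δ/τ) · log^κ_x(y)). Then dκ(x, z) + dκ(z, y) = dκ(x, y), i.e. the interpolated point z lies on the geodesic segment between x and y. -/
open Real Filter

open scoped RealInnerProductSpace

/-- Inverse hyperbolic tangent. -/
noncomputable def artanh (x : ℝ) : ℝ := (1 / 2) * Real.log ((1 + x) / (1 - x))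

variable {E : Type*} [NormedAddCommGroup E] [InnerProductSpace ℝ E]

/-- Möbius (gyrovector) addition on the Poincaré ball of curvature `κ`. -/
noncomputable def mAdd (κ : ℝ) (x y : E) : E :=
  (1 - 2 * κ * ⟪x, y⟫ + κ ^ 2 * ‖x‖ ^ 2 * ‖y‖ ^ 2)⁻¹ •
    ((1 - 2 * κ * ⟪x, y⟫ - κ * ‖y‖ ^ 2) • x + (1 + κ * ‖x‖ ^ 2) • y)

/-- Conformal factor `λκ(x) = 2 / (1 + κ‖x‖²)`. -/
noncomputable def lam (κ : ℝ) (x : E) : ℝ := 2 / (1 + κ * ‖x‖ ^ 2)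

open Classical in
/-- Möbius scalar multiplication `r ⊗κ x`. -/
noncomputable def mSmul (κ r : ℝ) (x : E) : E :=
  if x = 0 then 0
  else ((1 / Real.sqrt (-κ)) * Real.tanh (r * _root_.artanh (Real.sqrt (-κ) * ‖x‖)) * ‖x‖⁻¹) • x

open Classical in
/-- Exponential map of the Poincaré ball at `x` with curvature `κ`. -/
noncomputable def expMap (κ : ℝ) (x v : E) : E :=
  if v = 0 then x
  else mAdd κ x
    ((Real.tanh (Real.sqrt (-κ) * lam κ x * ‖v‖ / 2) / (Real.sqrt (-κ) * ‖v‖)) • v)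

/-- Logarithmic map of the Poincaré ball at `x` with curvature `κ`. -/
noncomputable def logMap (κ : ℝ) (x y : E) : E :=
  ((2 / (Real.sqrt (-κ) * lam κ x)) * _root_.artanh (Real.sqrt (-κ) * ‖mAdd κ (-x) y‖) *
      ‖mAdd κ (-x) y‖⁻¹) • mAdd κ (-x) y

/-- Geodesic distance of the Poincaré ball of curvature `κ`. -/
noncomputable def dK (κ : ℝ) (x y : E) : ℝ :=
  (2 / Real.sqrt (-κ)) * _root_.artanh (Real.sqrt (-κ) * ‖mAdd κ (-x) y‖)

/-- Membership in the Poincaré ball of curvature `κ`: `κ·‖x‖² > −1`. -/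
def inBall (κ : ℝ) (x : E) : Prop := κ * ‖x‖ ^ 2 > -1

/-!
Put `w = (-x) ⊕κ y`. The geodesic from `x` to `y` is `s ↦ x ⊕κ (s ⊗κ w)`: the exponential map
sends `s · log^κ_x(y)` to it, and it passes through `x` at `s = 0` and through `y` at `s = 1`.
Left Möbius translations are isometries of `dκ`, since `‖(-p) ⊕κ q‖` is a function of the
invariant `‖p - q‖² / ((1 + κ‖p‖²)(1 + κ‖q‖²))`, which they preserve. On the ray through `w`,
Möbius scalar multiplication turns `⊕κ` into addition of scalars (the addition formula for
`tanh`), so `dκ(r ⊗κ w, s ⊗κ w) = |s - r| · dκ(0, w)`; the three distances are therefore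
`t·d`, `(1 - t)·d` and `d` for `t = δ/τ ∈ [0, 1]`.
-/

theorem Real.tanh_add (x y : ℝ) : tanh (x + y) = (tanh x + tanh y) / (1 + tanh x * tanh y) := by
  have hx := (cosh_pos x).ne'
  have hy := (cosh_pos y).ne'
  simp only [tanh_eq_sinh_div_cosh, sinh_add, cosh_add]
  field_simp

theorem Real.abs_tanh (x : ℝ) : |tanh x| = tanh |x| := by
  rw [tanh_eq_sinh_div_cosh, tanh_eq_sinh_div_cosh, abs_div, abs_sinh, cosh_abs,
    abs_of_pos (cosh_pos x)]

theorem artanh_eq_real_artanh {x : ℝ} (hx : x ∈ Set.Icc (-1) 1) :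
    _root_.artanh x = Real.artanh x :=
  (Real.artanh_eq_half_log hx).symm

theorem artanh_abs_tanh (x : ℝ) : _root_.artanh |tanh x| = |x| := by
  rw [Real.abs_tanh, artanh_eq_real_artanh ⟨(neg_one_lt_tanh _).le, (tanh_lt_one _).le⟩,
    Real.artanh_tanh]

def mAddDenom (κ : ℝ) (x y : E) : ℝ := 1 - 2 * κ * ⟪x, y⟫ + κ ^ 2 * ‖x‖ ^ 2 * ‖y‖ ^ 2

theorem mAdd_def (κ : ℝ) (x y : E) : mAdd κ x y = (mAddDenom κ x y)⁻¹ •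
    ((1 - 2 * κ * ⟪x, y⟫ - κ * ‖y‖ ^ 2) • x + (1 + κ * ‖x‖ ^ 2) • y) := rfl

theorem mAddDenom_pos {κ : ℝ} (hκ : κ < 0) {x y : E} (hx : inBall κ x) (hy : inBall κ y) :
    0 < mAddDenom κ x y := by
  unfold inBall at hx hy
  have hxy : 0 < 1 + κ * (‖x‖ * ‖y‖) := by
    nlinarith [sq_nonneg (‖x‖ - ‖y‖), mul_nonneg (norm_nonneg x) (norm_nonneg y)]
  calc 0 < (1 + κ * (‖x‖ * ‖y‖)) ^ 2 := by positivity
    _ ≤ mAddDenom κ x y := by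
      have hinner : 0 ≤ ⟪x, y⟫ + ‖x‖ * ‖y‖ := by
        linarith [neg_le_of_abs_le (abs_real_inner_le_norm x y)]
      unfold mAddDenom
      nlinarith [mul_nonneg (neg_nonneg.mpr hκ.le) hinner]

theorem mAdd_zero (κ : ℝ) (x : E) : mAdd κ x 0 = x := by
  simp [mAdd]

theorem mAdd_smul_smul (κ a b : ℝ) (u : E) :
    mAdd κ (a • u) (b • u) = ((a + b) / (1 - κ * a * b * ‖u‖ ^ 2)) • u := by
  have hD : mAddDenom κ (a • u) (b • u) = (1 - κ * a * b * ‖u‖ ^ 2) ^ 2 := by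
    simp only [mAddDenom, real_inner_smul_left, real_inner_smul_right, real_inner_self_eq_norm_sq,
      norm_smul, Real.norm_eq_abs, mul_pow, sq_abs]
    ring
  rw [mAdd_def, hD]
  simp only [real_inner_smul_left, real_inner_smul_right, real_inner_self_eq_norm_sq,
    norm_smul, Real.norm_eq_abs, mul_pow, sq_abs, smul_smul, ← add_smul]
  congr 1
  rcases eq_or_ne (1 - κ * a * b * ‖u‖ ^ 2) 0 with h | h
  · simp [h]
  · field_simp
    ring

theorem norm_mAdd_sq (κ : ℝ) (x y : E) :
    ‖mAdd κ x y‖ ^ 2 = ‖x + y‖ ^ 2 / mAddDenom κ x y := by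
  have hnum : ‖(1 - 2 * κ * ⟪x, y⟫ - κ * ‖y‖ ^ 2) • x + (1 + κ * ‖x‖ ^ 2) • y‖ ^ 2 =
      mAddDenom κ x y * ‖x + y‖ ^ 2 := by
    rw [norm_add_sq_real, norm_add_sq_real]
    simp only [norm_smul, real_inner_smul_left, real_inner_smul_right, Real.norm_eq_abs, mul_pow,
      sq_abs, mAddDenom]
    ring
  rw [mAdd_def, norm_smul, mul_pow, hnum, norm_inv, Real.norm_eq_abs, inv_pow, sq_abs]
  rcases eq_or_ne (mAddDenom κ x y) 0 with h | h
  · simp [h]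
  · field_simp

theorem one_add_mul_norm_mAdd_sq (κ : ℝ) {x y : E} (h : mAddDenom κ x y ≠ 0) :
    1 + κ * ‖mAdd κ x y‖ ^ 2 = (1 + κ * ‖x‖ ^ 2) * (1 + κ * ‖y‖ ^ 2) / mAddDenom κ x y := by
  rw [norm_mAdd_sq, norm_add_sq_real]
  field_simp
  unfold mAddDenom
  ring

theorem inBall_mAdd {κ : ℝ} (hκ : κ < 0) {x y : E} (hx : inBall κ x) (hy : inBall κ y) :
    inBall κ (mAdd κ x y) := by
  have hD := mAddDenom_pos hκ hx hy
  unfold inBall at *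
  have : 0 < 1 + κ * ‖mAdd κ x y‖ ^ 2 := by
    rw [one_add_mul_norm_mAdd_sq κ hD.ne']
    exact div_pos (mul_pos (by linarith) (by linarith)) hD
  linarith

theorem mAdd_neg_mAdd (κ : ℝ) {x u : E} (h : mAddDenom κ x u ≠ 0) (hx : 1 + κ * ‖x‖ ^ 2 ≠ 0) :
    mAdd κ (-x) (mAdd κ x u) = u := by
  set D := mAddDenom κ x u with hD
  have hz : mAdd κ x u = (D⁻¹ * (1 - 2 * κ * ⟪x, u⟫ - κ * ‖u‖ ^ 2)) • x +
      (D⁻¹ * (1 + κ * ‖x‖ ^ 2)) • u := by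
    rw [mAdd_def, smul_add, smul_smul, smul_smul]
  have hD' : mAddDenom κ (-x) (mAdd κ x u) = (1 + κ * ‖x‖ ^ 2) ^ 2 / D := by
    rw [hz]
    simp only [mAddDenom, norm_neg, inner_neg_left, inner_add_right, real_inner_smul_right,
      real_inner_self_eq_norm_sq, norm_add_sq_real, norm_smul, Real.norm_eq_abs, mul_pow, sq_abs,
      real_inner_smul_left]
    field_simp
    rw [hD, mAddDenom]
    ring
  rw [mAdd_def, hD', hz]
  simp only [norm_neg, inner_neg_left, inner_add_right, real_inner_smul_right,
    real_inner_self_eq_norm_sq, norm_add_sq_real, norm_smul, Real.norm_eq_abs, mul_pow, sq_abs,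
    real_inner_smul_left]
  match_scalars
  · field_simp
    rw [hD, mAddDenom]
    ring
  · field_simp

theorem norm_mAdd_sub_mAdd_sq (κ : ℝ) {x a b : E} (ha : mAddDenom κ x a ≠ 0)
    (hb : mAddDenom κ x b ≠ 0) :
    ‖mAdd κ x a - mAdd κ x b‖ ^ 2 =
      (1 + κ * ‖x‖ ^ 2) ^ 2 * ‖a - b‖ ^ 2 / (mAddDenom κ x a * mAddDenom κ x b) := by
  rw [norm_sub_sq_real a b, mAdd_def, mAdd_def, ← real_inner_self_eq_norm_sq]
  simp only [inner_sub_left, inner_sub_right, inner_add_left, inner_add_right, inner_smul_left,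
    inner_smul_right, real_inner_self_eq_norm_sq, real_inner_comm x a, real_inner_comm x b,
    real_inner_comm a b, RCLike.conj_to_real]
  field_simp
  simp only [mAddDenom]
  ring

/-- For `κ = -c²`, `cosh (c · dK κ x y) = 1 - 2κ · isometricInvariant κ x y`. -/
noncomputable def isometricInvariant (κ : ℝ) (x y : E) : ℝ :=
  ‖x - y‖ ^ 2 / ((1 + κ * ‖x‖ ^ 2) * (1 + κ * ‖y‖ ^ 2))

theorem isometricInvariant_mAdd_left (κ : ℝ) {x a b : E} (hx : 1 + κ * ‖x‖ ^ 2 ≠ 0)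
    (ha : mAddDenom κ x a ≠ 0) (hb : mAddDenom κ x b ≠ 0) :
    isometricInvariant κ (mAdd κ x a) (mAdd κ x b) = isometricInvariant κ a b := by
  rw [isometricInvariant, isometricInvariant, norm_mAdd_sub_mAdd_sq κ ha hb,
    one_add_mul_norm_mAdd_sq κ ha, one_add_mul_norm_mAdd_sq κ hb]
  field_simp

theorem norm_mAdd_neg_sq (κ : ℝ) {x y : E} (hx : 1 + κ * ‖x‖ ^ 2 ≠ 0)
    (hy : 1 + κ * ‖y‖ ^ 2 ≠ 0) :
    ‖mAdd κ (-x) y‖ ^ 2 = isometricInvariant κ x y / (1 - κ * isometricInvariant κ x y) := by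
  have hD : mAddDenom κ (-x) y = (1 + κ * ‖x‖ ^ 2) * (1 + κ * ‖y‖ ^ 2) - κ * ‖x - y‖ ^ 2 := by
    rw [mAddDenom, norm_sub_sq_real, norm_neg, inner_neg_left]
    ring
  rw [norm_mAdd_sq, hD, isometricInvariant, neg_add_eq_sub, norm_sub_rev]
  field_simp

theorem norm_mAdd_neg_mAdd_mAdd {κ : ℝ} (hκ : κ < 0) {x a b : E} (hx : inBall κ x)
    (ha : inBall κ a) (hb : inBall κ b) :
    ‖mAdd κ (-mAdd κ x a) (mAdd κ x b)‖ = ‖mAdd κ (-a) b‖ := by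
  have one_add_ne {p : E} (hp : inBall κ p) : 1 + κ * ‖p‖ ^ 2 ≠ 0 := by
    unfold inBall at hp; linarith
  refine (pow_left_inj₀ (norm_nonneg _) (norm_nonneg _) two_ne_zero).mp ?_
  rw [norm_mAdd_neg_sq κ (one_add_ne (inBall_mAdd hκ hx ha)) (one_add_ne (inBall_mAdd hκ hx hb)),
    norm_mAdd_neg_sq κ (one_add_ne ha) (one_add_ne hb),
    isometricInvariant_mAdd_left κ (one_add_ne hx) (mAddDenom_pos hκ hx ha).ne'
      (mAddDenom_pos hκ hx hb).ne']

theorem dK_mAdd_left {κ : ℝ} (hκ : κ < 0) {x a b : E} (hx : inBall κ x) (ha : inBall κ a)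
    (hb : inBall κ b) : dK κ (mAdd κ x a) (mAdd κ x b) = dK κ a b := by
  rw [dK, dK, norm_mAdd_neg_mAdd_mAdd hκ hx ha hb]

theorem mSmul_of_ne_zero (κ r : ℝ) {w : E} (hw : w ≠ 0) :
    mSmul κ r w = ((1 / √(-κ)) * tanh (r * _root_.artanh (√(-κ) * ‖w‖)) * ‖w‖⁻¹) • w :=
  if_neg hw

theorem zero_mSmul (κ : ℝ) (w : E) : mSmul κ 0 w = 0 := by
  simp [mSmul]

theorem neg_mSmul (κ r : ℝ) (w : E) : mSmul κ (-r) w = -mSmul κ r w := by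
  by_cases hw : w = 0
  · simp [mSmul, hw]
  · simp only [mSmul_of_ne_zero κ _ hw, neg_mul, tanh_neg, mul_neg, neg_smul]

theorem add_mSmul {κ : ℝ} (hκ : κ < 0) (r s : ℝ) (w : E) :
    mSmul κ (r + s) w = mAdd κ (mSmul κ r w) (mSmul κ s w) := by
  by_cases hw : w = 0
  · simp [mSmul, hw, mAdd_zero]
  rw [mSmul_of_ne_zero κ _ hw, mSmul_of_ne_zero κ _ hw, mSmul_of_ne_zero κ _ hw, mAdd_smul_smul,
    add_mul, Real.tanh_add]
  congr 1
  set c := √(-κ)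
  have hκc : κ = -c ^ 2 := by rw [Real.sq_sqrt (by linarith), neg_neg]
  have hc : c ≠ 0 := (Real.sqrt_pos.mpr (by linarith)).ne'
  have hn : ‖w‖ ≠ 0 := norm_ne_zero_iff.mpr hw
  set p := tanh (r * _root_.artanh (c * ‖w‖))
  set q := tanh (s * _root_.artanh (c * ‖w‖))
  have hpq : |p * q| < 1 := by
    rw [abs_mul]
    exact mul_lt_one_of_nonneg_of_lt_one_left (abs_nonneg _) (abs_tanh_lt_one _)
      (abs_tanh_lt_one _).le
  have hden : 1 + p * q ≠ 0 := by linarith [neg_abs_le (p * q)]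
  have hdenom : 1 - κ * (1 / c * p * ‖w‖⁻¹) * (1 / c * q * ‖w‖⁻¹) * ‖w‖ ^ 2 = 1 + p * q := by
    rw [hκc]
    field_simp
    ring
  rw [hdenom]
  field_simp

theorem sqrt_neg_mul_norm_mSmul {κ : ℝ} (hκ : κ < 0) (r : ℝ) (w : E) :
    √(-κ) * ‖mSmul κ r w‖ = |tanh (r * _root_.artanh (√(-κ) * ‖w‖))| := by
  by_cases hw : w = 0
  · simp [mSmul, hw, _root_.artanh]
  have hc : 0 < √(-κ) := Real.sqrt_pos.mpr (by linarith)
  have hn : 0 < ‖w‖ := norm_pos_iff.mpr hw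
  rw [mSmul_of_ne_zero κ _ hw, norm_smul, Real.norm_eq_abs, abs_mul, abs_mul,
    abs_of_pos (one_div_pos.mpr hc), abs_of_pos (inv_pos.mpr hn)]
  field_simp

theorem inBall_mSmul {κ : ℝ} (hκ : κ < 0) (r : ℝ) (w : E) : inBall κ (mSmul κ r w) := by
  have h := sqrt_neg_mul_norm_mSmul hκ r w
  have hsq : κ * ‖mSmul κ r w‖ ^ 2 = -(√(-κ) * ‖mSmul κ r w‖) ^ 2 := by
    rw [mul_pow, Real.sq_sqrt (by linarith)]
    ring
  rw [inBall, hsq, h, sq_abs]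
  linarith [tanh_sq_lt_one (r * _root_.artanh (√(-κ) * ‖w‖))]

theorem one_mSmul {κ : ℝ} (hκ : κ < 0) {w : E} (hw : inBall κ w) : mSmul κ 1 w = w := by
  by_cases hw0 : w = 0
  · simp [mSmul, hw0]
  have hc : 0 < √(-κ) := Real.sqrt_pos.mpr (by linarith)
  have hn : 0 < ‖w‖ := norm_pos_iff.mpr hw0
  have hT : (√(-κ) * ‖w‖) ^ 2 < 1 := by
    rw [mul_pow, Real.sq_sqrt (by linarith)]
    unfold inBall at hw
    linarith
  have hT1 : √(-κ) * ‖w‖ < 1 := by nlinarith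
  rw [mSmul_of_ne_zero κ _ hw0, one_mul,
    artanh_eq_real_artanh ⟨by nlinarith, hT1.le⟩, Real.tanh_artanh ⟨by nlinarith, hT1⟩]
  field_simp
  simp

theorem dK_mSmul_mSmul {κ : ℝ} (hκ : κ < 0) (r s : ℝ) (w : E) :
    dK κ (mSmul κ r w) (mSmul κ s w) = 2 / √(-κ) * |(s - r) * _root_.artanh (√(-κ) * ‖w‖)| := by
  rw [dK, ← neg_mSmul, ← add_mSmul hκ, sqrt_neg_mul_norm_mSmul hκ, artanh_abs_tanh, neg_add_eq_sub]

theorem expMap_smul (κ ρ : ℝ) (x w : E) :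
    expMap κ x (ρ • w) =
      mAdd κ x ((tanh (√(-κ) * lam κ x * ρ * ‖w‖ / 2) / (√(-κ) * ‖w‖)) • w) := by
  by_cases h : ρ • w = 0
  · rw [expMap, if_pos h]
    rcases smul_eq_zero.mp h with h | h <;> simp [h, mAdd_zero]
  obtain ⟨hρ, hw⟩ := smul_ne_zero_iff.mp h
  have hn : ‖w‖ ≠ 0 := norm_ne_zero_iff.mpr hw
  rw [expMap, if_neg h, smul_smul, norm_smul, Real.norm_eq_abs]
  congr 2
  rcases abs_cases ρ with ⟨habs, -⟩ | ⟨habs, -⟩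
  · rw [habs]
    field_simp
  · rw [habs]
    field_simp
    rw [tanh_neg, neg_div, neg_neg]

theorem expMap_smul_logMap {κ : ℝ} (hκ : κ < 0) {x : E} (hx : inBall κ x) (t : ℝ) (y : E) :
    expMap κ x (t • logMap κ x y) = mAdd κ x (mSmul κ t (mAdd κ (-x) y)) := by
  rw [logMap]
  generalize mAdd κ (-x) y = w
  by_cases hw : w = 0
  · simp [expMap, mSmul, hw, mAdd_zero]
  have hc : √(-κ) ≠ 0 := (Real.sqrt_pos.mpr (by linarith)).ne'
  have hlam : lam κ x ≠ 0 := by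
    unfold inBall at hx
    exact div_ne_zero two_ne_zero (by linarith)
  have hn : ‖w‖ ≠ 0 := norm_ne_zero_iff.mpr hw
  rw [smul_smul, expMap_smul, mSmul_of_ne_zero κ t hw]
  congr 2
  field_simp

theorem interpolation_on_geodesic_general
    (κ : ℝ) (hκ : κ < 0) (x y : E) (hx : inBall κ x) (hy : inBall κ y)
    (δ τ : ℝ) (hδ : 0 < δ) (hδτ : δ < τ) :
    dK κ x (expMap κ x ((δ / τ) • logMap κ x y)) +
      dK κ (expMap κ x ((δ / τ) • logMap κ x y)) y = dK κ x y := by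
  have hτ : 0 < τ := hδ.trans hδτ
  have ht0 : 0 ≤ δ / τ := (div_pos hδ hτ).le
  have ht1 : δ / τ ≤ 1 := (div_le_one hτ).mpr hδτ.le
  set w := mAdd κ (-x) y
  have hx' : inBall κ (-x) := by rwa [inBall, norm_neg]
  have hw : inBall κ w := inBall_mAdd hκ hx' hy
  have hx0 : mAdd κ x (mSmul κ 0 w) = x := by rw [zero_mSmul, mAdd_zero]
  have hy1 : mAdd κ x (mSmul κ 1 w) = y := by
    have hx1 : 1 + κ * ‖-x‖ ^ 2 ≠ 0 := by unfold inBall at hx'; linarith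
    simpa [one_mSmul hκ hw] using mAdd_neg_mAdd κ (mAddDenom_pos hκ hx' hy).ne' hx1
  have hdist (r s : ℝ) : dK κ (mAdd κ x (mSmul κ r w)) (mAdd κ x (mSmul κ s w)) =
      2 / √(-κ) * |(s - r) * _root_.artanh (√(-κ) * ‖w‖)| := by
    rw [dK_mAdd_left hκ hx (inBall_mSmul hκ r w) (inBall_mSmul hκ s w), dK_mSmul_mSmul hκ]
  have hxz := hdist 0 (δ / τ)
  have hzy := hdist (δ / τ) 1
  have hxy := hdist 0 1
  rw [hx0] at hxz hxy
  rw [hy1] at hzy hxy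
  rw [expMap_smul_logMap hκ hx, hxz, hzy, hxy, abs_mul, abs_mul, abs_mul, sub_zero, sub_zero,
    abs_of_nonneg ht0, abs_of_nonneg (sub_nonneg.mpr ht1), abs_one]
  ring

theorem interpolation_on_geodesic
    (κ : ℝ) (hκ : κ < 0) (x y : E) (hx : inBall κ x) (hy : inBall κ y) (hxy : y ≠ x)
    (δ τ : ℝ) (hδ : 0 < δ) (hδτ : δ < τ) :
    dK κ x (expMap κ x ((δ / τ) • logMap κ x y)) +
      dK κ (expMap κ x ((δ / τ) • logMap κ x y)) y = dK κ x y :=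
  interpolation_on_geodesic_general κ hκ x y hx hy δ τ hδ hδτ
end

section
/- Let κ < 0, let x be a point of the Poincaré ball of curvature κ, and let v be any vector. Then exp^κ_x(v) is again in the Poincaré ball of curvature κ, i.e. κ·‖exp^κ_x(v)‖² > −1. -/
open Real Filter

open scoped RealInnerProductSpace

variable {E : Type*} [NormedAddCommGroup E] [InnerProductSpace ℝ E]

/-!
Möbius addition satisfies the identity
`1 + κ‖x ⊕κ y‖² = (1 + κ‖x‖²)(1 + κ‖y‖²) / (1 − 2κ⟪x,y⟫ + κ²‖x‖²‖y‖²)`,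
and for `κ < 0` the denominator is at least `(1 + κ‖x‖‖y‖)² > 0` by Cauchy–Schwarz. Hence the
ball is closed under `⊕κ`. The exponential map adds to `x` a vector of norm `|tanh(…)| / √(−κ)`,
which lies in the ball because `|tanh| < 1`.
-/

theorem inBall_iff_sqrt_mul_norm_lt {F : Type*} [NormedAddCommGroup F] {κ : ℝ} {x : F}
    (hκ : κ ≤ 0) : inBall κ x ↔ √(-κ) * ‖x‖ < 1 := by
  have hsq : (√(-κ) * ‖x‖) ^ 2 = -κ * ‖x‖ ^ 2 := by
    rw [mul_pow, Real.sq_sqrt (neg_nonneg.mpr hκ)]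
  rw [inBall, gt_iff_lt, ← sq_lt_one_iff₀ (by positivity), hsq]
  constructor <;> intro h <;> linarith

section PoincareBall

variable {κ : ℝ} {x y : E}

theorem mAdd_denom_pos (hκ : κ < 0) (hx : inBall κ x) (hy : inBall κ y) :
    0 < 1 - 2 * κ * ⟪x, y⟫ + κ ^ 2 * ‖x‖ ^ 2 * ‖y‖ ^ 2 := by
  rw [inBall_iff_sqrt_mul_norm_lt hκ.le] at hx hy
  have hc : √(-κ) ^ 2 = -κ := Real.sq_sqrt (neg_nonneg.mpr hκ.le)
  have hprod : 0 < 1 + κ * (‖x‖ * ‖y‖) := by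
    have : (√(-κ) * ‖x‖) * (√(-κ) * ‖y‖) < 1 :=
      mul_lt_one_of_nonneg_of_lt_one_left (by positivity) hx hy.le
    nlinarith
  have hinner : -(‖x‖ * ‖y‖) ≤ ⟪x, y⟫ := neg_le_of_abs_le (abs_real_inner_le_norm x y)
  calc 0 < (1 + κ * (‖x‖ * ‖y‖)) ^ 2 := pow_pos hprod 2
    _ ≤ 1 - 2 * κ * ⟪x, y⟫ + κ ^ 2 * ‖x‖ ^ 2 * ‖y‖ ^ 2 := by nlinarith

theorem norm_sq_smul_add_smul (a b : ℝ) (x y : E) :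
    ‖a • x + b • y‖ ^ 2 = a ^ 2 * ‖x‖ ^ 2 + 2 * (a * b) * ⟪x, y⟫ + b ^ 2 * ‖y‖ ^ 2 := by
  rw [norm_add_sq_real, norm_smul, norm_smul, mul_pow, mul_pow, Real.norm_eq_abs,
    Real.norm_eq_abs, sq_abs, sq_abs, real_inner_smul_left, real_inner_smul_right]
  ring

theorem one_add_mul_norm_sq_mAdd (hD : 1 - 2 * κ * ⟪x, y⟫ + κ ^ 2 * ‖x‖ ^ 2 * ‖y‖ ^ 2 ≠ 0) :
    1 + κ * ‖mAdd κ x y‖ ^ 2 = (1 + κ * ‖x‖ ^ 2) * (1 + κ * ‖y‖ ^ 2) /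
      (1 - 2 * κ * ⟪x, y⟫ + κ ^ 2 * ‖x‖ ^ 2 * ‖y‖ ^ 2) := by
  rw [mAdd, norm_smul, mul_pow, norm_sq_smul_add_smul, Real.norm_eq_abs, sq_abs, inv_pow]
  generalize hd : 1 - 2 * κ * ⟪x, y⟫ + κ ^ 2 * ‖x‖ ^ 2 * ‖y‖ ^ 2 = d at hD ⊢
  field_simp
  rw [← hd]
  ring

theorem mAdd_mem_ball (hκ : κ < 0) (hx : inBall κ x) (hy : inBall κ y) :
    inBall κ (mAdd κ x y) := by
  have hD := mAdd_denom_pos hκ hx hy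
  have hsum := one_add_mul_norm_sq_mAdd hD.ne'
  have hpos : 0 < (1 + κ * ‖x‖ ^ 2) * (1 + κ * ‖y‖ ^ 2) / _ :=
    div_pos (mul_pos (by rw [inBall] at hx; linarith) (by rw [inBall] at hy; linarith)) hD
  rw [inBall]
  linarith

end PoincareBall

theorem expMap_mem_ball
    (κ : ℝ) (hκ : κ < 0) (x : E) (hx : inBall κ x) (v : E) :
    inBall κ (expMap κ x v) := by
  rw [expMap]
  split_ifs with hv
  · exact hx
  refine mAdd_mem_ball hκ hx ?_
  have hc : 0 < √(-κ) := Real.sqrt_pos.mpr (neg_pos.mpr hκ)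
  have hv_pos : 0 < ‖v‖ := norm_pos_iff.mpr hv
  set s := Real.tanh (√(-κ) * lam κ x * ‖v‖ / 2)
  have hnorm : √(-κ) * ‖(s / (√(-κ) * ‖v‖)) • v‖ = |s| := by
    rw [norm_smul, Real.norm_eq_abs, abs_div, abs_of_pos (mul_pos hc hv_pos)]
    field_simp
  rw [inBall_iff_sqrt_mul_norm_lt hκ.le, hnorm]
  exact Real.abs_tanh_lt_one _
end

section
/- (The Möbius gyromidpoint recovers the weighted arithmetic mean in the flat limit.) Let z₁, …, z_J be points of a real inner product space with zⱼ ≠ 0 not all zero in weighted sum, and let η₁, …, η_J be strictly positive real weights. For κ < 0 define the gyromidpoint μκ = (1/2) ⊗κ ( (Σⱼ ηⱼ·λκ(zⱼ)·zⱼ) / (Σⱼ ηⱼ·(λκ(zⱼ) − 1)) ), where λκ(z) = 2/(1 + κ‖z‖²). If Σⱼ ηⱼ·zⱼ ≠ 0, then μκ tends to (Σⱼ ηⱼ·zⱼ) / (Σⱼ ηⱼ) as κ → 0 from the left (κ → 0⁻ along negative reals). -/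
open Real Filter

open scoped RealInnerProductSpace

variable {E : Type*} [NormedAddCommGroup E] [InnerProductSpace ℝ E]

/-!
With `c = √(-κ)` and `φ r t = tanh (r * artanh t)`, Möbius scalar multiplication scales `x` by
`φ r (c‖x‖) / (c‖x‖)`, the difference quotient of `φ r` at `0` taken at `c‖x‖`. As `φ r` has
derivative `r` at `0`, this quotient extends continuously to `0` with value `r` (`dslope`), so
`r ⊗κ w κ → r • lim w` as `κ → 0⁻`. Since `λκ → 2`, the argument of `(1/2) ⊗κ` tends to twice
the weighted mean, and halving gives the mean.
-/

open scoped Topology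

theorem hasDerivAt_tanh (x : ℝ) : HasDerivAt Real.tanh (cosh x ^ 2)⁻¹ x := by
  have h := (hasDerivAt_sinh x).fun_div (hasDerivAt_cosh x) (cosh_pos x).ne'
  rw [show Real.tanh = fun y => sinh y / cosh y from funext tanh_eq_sinh_div_cosh]
  refine h.congr_deriv ?_
  rw [← mul_one (cosh x ^ 2)⁻¹, ← cosh_sq_sub_sinh_sq x]
  ring

theorem hasDerivAt_artanh {x : ℝ} (hx : x ∈ Set.Ioo (-1) 1) :
    HasDerivAt _root_.artanh (1 - x ^ 2)⁻¹ x := by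
  obtain ⟨h₁, h₂⟩ := hx
  have hq := ((hasDerivAt_id' x).const_add 1).fun_div ((hasDerivAt_id' x).const_sub 1)
    (by linarith)
  refine ((hq.log (div_pos (by linarith) (by linarith)).ne').const_mul (1 / 2)).congr_deriv ?_
  have : 1 - x ≠ 0 := by linarith
  have : 1 + x ≠ 0 := by linarith
  have : 1 - x ^ 2 ≠ 0 := by nlinarith
  field_simp
  ring

theorem hasDerivAt_tanh_mul_artanh_zero (r : ℝ) :
    HasDerivAt (fun t => Real.tanh (r * _root_.artanh t)) r 0 := by
  refine ((hasDerivAt_tanh (r * _root_.artanh 0)).comp 0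
    ((hasDerivAt_artanh (by norm_num : (0 : ℝ) ∈ Set.Ioo (-1) 1)).const_mul r)).congr_deriv ?_
  simp [_root_.artanh]

theorem mSmul_eq_dslope_smul {κ : ℝ} (hκ : κ < 0) (r : ℝ) (x : E) :
    mSmul κ r x = dslope (fun t => Real.tanh (r * _root_.artanh t)) 0 (√(-κ) * ‖x‖) • x := by
  by_cases hx : x = 0
  · simp [hx, mSmul]
  have hc : 0 < √(-κ) := sqrt_pos.2 (neg_pos.2 hκ)
  have hx' : 0 < ‖x‖ := norm_pos_iff.2 hx
  rw [mSmul, if_neg hx, dslope_of_ne _ (mul_pos hc hx').ne', slope_def_field]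
  simp [_root_.artanh]
  field_simp

theorem tendsto_mSmul_nhdsLT_zero {w : ℝ → E} {L : E} (hw : Tendsto w (𝓝[<] 0) (𝓝 L))
    (r : ℝ) : Tendsto (fun κ => mSmul κ r (w κ)) (𝓝[<] 0) (𝓝 (r • L)) := by
  have hφ := hasDerivAt_tanh_mul_artanh_zero r
  have hcont := continuousAt_dslope_same.2 hφ.differentiableAt
  rw [ContinuousAt, dslope_same, hφ.deriv] at hcont
  have hsqrt : Tendsto (fun κ : ℝ => √(-κ)) (𝓝[<] 0) (𝓝 0) :=
    ((by fun_prop : Continuous fun κ : ℝ => √(-κ)).tendsto' 0 0 (by simp)).mono_left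
      nhdsWithin_le_nhds
  have ht : Tendsto (fun κ => √(-κ) * ‖w κ‖) (𝓝[<] 0) (𝓝 0) := by
    simpa using hsqrt.mul hw.norm
  refine ((hcont.comp ht).smul hw).congr' ?_
  filter_upwards [self_mem_nhdsWithin] with κ hκ using (mSmul_eq_dslope_smul hκ r (w κ)).symm

theorem tendsto_lam_zero {F : Type*} [NormedAddCommGroup F] (x : F) :
    Tendsto (fun κ => lam κ x) (𝓝 0) (𝓝 2) := by
  have : ContinuousAt (fun κ => lam κ x) 0 := by
    unfold lam
    fun_prop (disch := simp)
  simpa [lam] using this.tendsto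

theorem tendsto_conformal_weighted_mean {ι : Type*} (s : Finset ι) (z : ι → E) (η : ι → ℝ)
    (hη : ∑ j ∈ s, η j ≠ 0) :
    Tendsto (fun κ => (∑ j ∈ s, η j * (lam κ (z j) - 1))⁻¹ • ∑ j ∈ s, (η j * lam κ (z j)) • z j)
      (𝓝 0) (𝓝 ((2 : ℝ) • (∑ j ∈ s, η j)⁻¹ • ∑ j ∈ s, η j • z j)) := by
  have hden : Tendsto (fun κ => ∑ j ∈ s, η j * (lam κ (z j) - 1)) (𝓝 0) (𝓝 (∑ j ∈ s, η j)) := by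
    convert tendsto_finsetSum s fun j _ => ((tendsto_lam_zero (z j)).sub_const 1).const_mul (η j)
    norm_num
  have hnum : Tendsto (fun κ => ∑ j ∈ s, (η j * lam κ (z j)) • z j) (𝓝 0)
      (𝓝 ((2 : ℝ) • ∑ j ∈ s, η j • z j)) := by
    rw [Finset.smul_sum]
    refine tendsto_finsetSum s fun j _ => ?_
    convert ((tendsto_lam_zero (z j)).const_mul (η j)).smul_const (z j) using 2
    rw [smul_smul, mul_comm]
  convert (hden.inv₀ hη).smul hnum using 2
  rw [smul_comm]

theorem gyromidpoint_flat_limit_general (J : ℕ) (z : Fin J → E) (η : Fin J → ℝ)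
    (hη : ∀ j, 0 < η j) :
    Tendsto
      (fun κ : ℝ => mSmul κ (1 / 2)
        ((∑ j, η j * (lam κ (z j) - 1))⁻¹ • ∑ j, (η j * lam κ (z j)) • z j))
      (nhdsWithin 0 (Set.Iio 0))
      (nhds ((∑ j, η j)⁻¹ • ∑ j, η j • z j)) := by
  rcases (Finset.univ : Finset (Fin J)).eq_empty_or_nonempty with hJ | hJ
  · simp [hJ, mSmul]
  have hS : ∑ j, η j ≠ 0 := (Finset.sum_pos (fun j _ => hη j) hJ).ne'
  have h := tendsto_mSmul_nhdsLT_zero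
    ((tendsto_conformal_weighted_mean Finset.univ z η hS).mono_left nhdsWithin_le_nhds) (1 / 2)
  rwa [smul_smul, one_div_mul_cancel two_ne_zero, one_smul] at h

theorem gyromidpoint_flat_limit (J : ℕ) (z : Fin J → E) (η : Fin J → ℝ)
    (hz : ∀ j, z j ≠ 0) (hη : ∀ j, 0 < η j) (hsum : ∑ j, η j • z j ≠ 0) :
    Tendsto
      (fun κ : ℝ => mSmul κ (1 / 2)
        ((∑ j, η j * (lam κ (z j) - 1))⁻¹ • ∑ j, (η j * lam κ (z j)) • z j))
      (nhdsWithin 0 (Set.Iio 0))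
      (nhds ((∑ j, η j)⁻¹ • ∑ j, η j • z j)) :=
  gyromidpoint_flat_limit_general J z η hη
end
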